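/- In a sound, weakly deterministic type 2 negotiation arena, if the initial atom n0 does not belong to the attractor A of nf, then Player 2 has a winning strategy in the termination game: choosing for atoms in N2 \ A an outcome sending some deterministic agent outside A maintains the invariant that some deterministic agent is ready to engage only in atoms outside A, hence nf never occurs and, by soundness, every play is infinite. -/
import Mathlib


structure Negotiation (A Atom Out : Type*) where
  n0 : Atom
  nf : Atom
  parties : Atom → Finset A
  parties_nonempty : ∀ n, (parties n).Nonempty
  mem_n0 : ∀ a, a ∈ parties n0
  mem_nf : ∀ a, a ∈ parties nf
  outcomes : Atom → Finset Out
  outcomes_nonempty : ∀ n, (outcomes n).Nonempty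
  X : Atom → A → Out → Set Atom
  Xf_empty : ∀ a r, X nf a r = ∅
  X_nonempty : ∀ n a r, n ≠ nf → a ∈ parties n → r ∈ outcomes n → (X n a r).Nonempty

namespace Negotiation

variable {A Atom Out : Type*}

/-- A marking `x` enables atom `n` iff every party of `n` is ready to engage in `n`. -/
def Enables (N : Negotiation A Atom Out) (x : A → Set Atom) (n : Atom) : Prop :=
  ∀ a ∈ N.parties n, n ∈ x a

open Classical in
/-- The marking obtained from `x` by the occurrence of `(n, r)`. -/
noncomputable def step (N : Negotiation A Atom Out) (x : A → Set Atom) (n : Atom) (r : Out) :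
    A → Set Atom :=
  fun a => if a ∈ N.parties n then N.X n a r else x a

/-- The initial marking. -/
def x0 (N : Negotiation A Atom Out) : A → Set Atom := fun _ => {N.n0}

/-- The final marking. -/
def xf (N : Negotiation A Atom Out) : A → Set Atom := fun _ => ∅

/-- Reachability by a finite occurrence sequence. -/
inductive Reach (N : Negotiation A Atom Out) : (A → Set Atom) → (A → Set Atom) → Prop
  | refl (x : A → Set Atom) : Reach N x x
  | tail {x y : A → Set Atom} (n : Atom) (r : Out) :
      Reach N x y → N.Enables y n → r ∈ N.outcomes n → Reach N x (N.step y n r)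

/-- An agent is deterministic if it is always ready to engage in exactly one atom. -/
def Det (N : Negotiation A Atom Out) (a : A) : Prop :=
  ∀ n r, n ≠ N.nf → a ∈ N.parties n → r ∈ N.outcomes n → ∃ m, N.X n a r = {m}

/-- Weakly deterministic type 2: every atom has a deterministic party. -/
def WD2 (N : Negotiation A Atom Out) : Prop :=
  ∀ n : Atom, ∃ a ∈ N.parties n, N.Det a

/-- Soundness: every atom can be enabled, and every occurrence sequence can be
extended to reach the final marking. -/
def Sound (N : Negotiation A Atom Out) : Prop :=
  (∀ n : Atom, ∃ x, N.Reach N.x0 x ∧ N.Enables x n) ∧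
  (∀ x, N.Reach N.x0 x → N.Reach x N.xf)

/-- A set of atoms is independent if no two distinct atoms share an agent. -/
def Indep (N : Negotiation A Atom Out) (S : Finset Atom) : Prop :=
  ∀ n ∈ S, ∀ n' ∈ S, n ≠ n' → Disjoint (N.parties n) (N.parties n')

open Classical in
/-- Simultaneous occurrence of an independent set `S` of atoms, with outcomes `F`. -/
noncomputable def execSet (N : Negotiation A Atom Out) (x : A → Set Atom)
    (S : Finset Atom) (F : Atom → Out) : A → Set Atom :=
  fun a => if ∃ n ∈ S, a ∈ N.parties n
    then ⋃ n ∈ S.filter (fun n => a ∈ N.parties n), N.X n a (F n)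
    else x a

/-- One step of the attractor construction (`N1` = atoms of Player 1). -/
def AttStep (N : Negotiation A Atom Out) (N1 : Set Atom) (T : Set Atom) : Set Atom :=
  T ∪ {n | n ∈ N1 ∧ ∃ r ∈ N.outcomes n, ∀ a ∈ N.parties n, N.Det a → N.X n a r ⊆ T}
    ∪ {n | n ∉ N1 ∧ ∀ r ∈ N.outcomes n, ∀ a ∈ N.parties n, N.Det a → N.X n a r ⊆ T}

/-- The attractor sequence `A_k` of the final atom. -/
def Att (N : Negotiation A Atom Out) (N1 : Set Atom) : ℕ → Set Atom
  | 0 => {N.nf}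
  | k + 1 => N.AttStep N1 (N.Att N1 k)

/-- The attractor of the final atom. -/
def attractor (N : Negotiation A Atom Out) (N1 : Set Atom) : Set Atom :=
  ⋃ k, N.Att N1 k

/-- The attractor index of an atom: the least `k` with `n ∈ A_k`. -/
noncomputable def attIdx (N : Negotiation A Atom Out) (N1 : Set Atom) (n : Atom) : ℕ :=
  sInf {k | n ∈ N.Att N1 k}

/-- The sequence of markings along a play of the termination game. -/
noncomputable def playMarks (N : Negotiation A Atom Out)
    (p : ℕ → Option (Finset Atom × (Atom → Out))) : ℕ → (A → Set Atom)
  | 0 => N.x0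
  | k + 1 =>
    match p k with
    | some SF => N.execSet (playMarks N p k) SF.1 SF.2
    | none => playMarks N p k

/-- Validity of a play: at each step the Scheduler picks a nonempty independent set of
enabled atoms with outcomes chosen for them; the play stops only at markings
enabling no atom. -/
def ValidPlay (N : Negotiation A Atom Out)
    (p : ℕ → Option (Finset Atom × (Atom → Out))) : Prop :=
  ∀ k, (∀ S F, p k = some (S, F) →
          S.Nonempty ∧ N.Indep S ∧ ∀ n ∈ S, N.Enables (N.playMarks p k) n ∧ F n ∈ N.outcomes n)
    ∧ (p k = none → p (k + 1) = none ∧ ∀ n, ¬ N.Enables (N.playMarks p k) n)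

/-- A play ends with the occurrence of the final atom. -/
def EndsWithFinal (N : Negotiation A Atom Out)
    (p : ℕ → Option (Finset Atom × (Atom → Out))) : Prop :=
  ∃ k S F, p k = some (S, F) ∧ N.nf ∈ S

end Negotiation

namespace Negotiation

variable {A Atom Out : Type*}

/-- Player 2's strategy: for every occurring atom it controls that lies outside the
attractor, the chosen outcome sends some deterministic party outside the attractor. -/
def FollowsEscape (N : Negotiation A Atom Out) (N1 : Set Atom)
    (p : ℕ → Option (Finset Atom × (Atom → Out))) : Prop :=
  ∀ k S F, p k = some (S, F) → ∀ n ∈ S, n ∉ N1 → n ∉ N.attractor N1 →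
    ∃ a ∈ N.parties n, N.Det a ∧ ∃ m ∈ N.X n a (F n), m ∉ N.attractor N1

end Negotiation

namespace Negotiation

variable {A Atom Out : Type*}

lemma att_succ_subset' (N : Negotiation A Atom Out) (N1 : Set Atom) (k : ℕ) :
    N.Att N1 k ⊆ N.Att N1 (k + 1) := fun _ hn => Or.inl (Or.inl hn)

lemma att_mono' (N : Negotiation A Atom Out) (N1 : Set Atom) {j k : ℕ} (h : j ≤ k) :
    N.Att N1 j ⊆ N.Att N1 k := by
  induction h with
  | refl => exact subset_rfl
  | step _ ih => exact ih.trans (N.att_succ_subset' N1 _)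

lemma reach_trans' {N : Negotiation A Atom Out} {x y z : A → Set Atom}
    (h1 : N.Reach x y) (h2 : N.Reach y z) : N.Reach x z := by
  induction h2 with
  | refl => exact h1
  | tail n r _ he hr ih => exact Reach.tail n r ih he hr

lemma reach_enabled' {N : Negotiation A Atom Out} {x z : A → Set Atom} (h : N.Reach x z) :
    x = z ∨ ∃ n, N.Enables x n := by
  induction h with
  | refl => exact Or.inl rfl
  | tail n r _ he hr ih =>
    rcases ih with rfl | h'
    · exact Or.inr ⟨n, he⟩
    · exact Or.inr h'

lemma execSet_insert' [DecidableEq Atom] (N : Negotiation A Atom Out) (x : A → Set Atom)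
    {n : Atom} {S : Finset Atom} (hn : n ∉ S) (F : Atom → Out)
    (hI : N.Indep (insert n S)) :
    N.execSet x (insert n S) F = N.execSet (N.step x n (F n)) S F := by
  classical
  funext a
  by_cases hS : ∃ m ∈ S, a ∈ N.parties m
  · obtain ⟨m, hm, ham⟩ := hS
    have han : a ∉ N.parties n := by
      have hd := hI m (Finset.mem_insert_of_mem hm) n (Finset.mem_insert_self n S)
        (by rintro rfl; exact hn hm)
      exact fun h => (Finset.disjoint_left.mp hd ham) h
    have h1 : ∃ m ∈ insert n S, a ∈ N.parties m := ⟨m, Finset.mem_insert_of_mem hm, ham⟩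
    have h2 : ∃ m ∈ S, a ∈ N.parties m := ⟨m, hm, ham⟩
    simp only [execSet, if_pos h1, if_pos h2]
    rw [Finset.filter_insert, if_neg han]
  · by_cases han : a ∈ N.parties n
    · have h1 : ∃ m ∈ insert n S, a ∈ N.parties m := ⟨n, Finset.mem_insert_self n S, han⟩
      simp only [execSet, if_pos h1, if_neg hS, step, if_pos han]
      rw [Finset.filter_insert, if_pos han]
      have hempty : S.filter (fun m => a ∈ N.parties m) = ∅ := by
        rw [Finset.filter_eq_empty_iff]
        intro m hm ham
        exact hS ⟨m, hm, ham⟩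
      rw [hempty]
      simp
    · have h1 : ¬∃ m ∈ insert n S, a ∈ N.parties m := by
        rintro ⟨m, hm, ham⟩
        rcases Finset.mem_insert.mp hm with rfl | h
        · exact han ham
        · exact hS ⟨m, h, ham⟩
      simp only [execSet, if_neg h1, if_neg hS, step, if_neg han]

lemma reach_execSet' (N : Negotiation A Atom Out) (S : Finset Atom) :
    ∀ (x : A → Set Atom) (F : Atom → Out), N.Indep S →
      (∀ n ∈ S, N.Enables x n) → (∀ n ∈ S, F n ∈ N.outcomes n) →
      N.Reach x (N.execSet x S F) := by
  classical
  induction S using Finset.induction with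
  | empty =>
    intro x F _ _ _
    have h : N.execSet x ∅ F = x := by
      funext a
      simp [execSet]
    rw [h]
    exact Reach.refl x
  | @insert n S hn ih =>
    intro x F hI hE hF
    rw [N.execSet_insert' x hn F hI]
    have hstep : N.Reach x (N.step x n (F n)) :=
      Reach.tail n (F n) (Reach.refl x) (hE n (Finset.mem_insert_self n S))
        (hF n (Finset.mem_insert_self n S))
    refine reach_trans' hstep (ih _ _ ?_ ?_ ?_)
    · intro m hm m' hm' hne
      exact hI m (Finset.mem_insert_of_mem hm) m' (Finset.mem_insert_of_mem hm') hne
    · intro m hm a ham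
      have hd := hI m (Finset.mem_insert_of_mem hm) n (Finset.mem_insert_self n S)
        (by rintro rfl; exact hn hm)
      have han : a ∉ N.parties n := fun h => (Finset.disjoint_left.mp hd ham) h
      simp only [step, if_neg han]
      exact hE m (Finset.mem_insert_of_mem hm) a ham
    · intro m hm
      exact hF m (Finset.mem_insert_of_mem hm)

lemma escape_of_not_mem' (N : Negotiation A Atom Out) (N1 : Set Atom)
    {n : Atom} {r : Out} (hn1 : n ∈ N1) (hr : r ∈ N.outcomes n)
    (hna : n ∉ N.attractor N1) :
    ∃ a ∈ N.parties n, N.Det a ∧ ∀ m ∈ N.X n a r, m ∉ N.attractor N1 := by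
  classical
  by_contra h
  push_neg at h
  have hnf : n ≠ N.nf := by
    rintro rfl
    exact hna (Set.mem_iUnion.mpr ⟨0, rfl⟩)
  have key : ∀ a ∈ N.parties n, N.Det a → ∃ j, N.X n a r ⊆ N.Att N1 j := by
    intro a hapar hd
    obtain ⟨m, hm, hma⟩ := h a hapar hd
    obtain ⟨m0, hm0⟩ := hd n r hnf hapar hr
    obtain ⟨j, hj⟩ := Set.mem_iUnion.mp hma
    refine ⟨j, ?_⟩
    rw [hm0] at hm ⊢
    rw [Set.mem_singleton_iff] at hm
    subst hm
    exact Set.singleton_subset_iff.mpr hj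
  set f : A → ℕ := fun a => if hj : ∃ j, N.X n a r ⊆ N.Att N1 j then hj.choose else 0 with hf
  set K := (N.parties n).sup f with hK
  have hKa : ∀ a ∈ N.parties n, N.Det a → N.X n a r ⊆ N.Att N1 K := by
    intro a hapar hd
    have hj := key a hapar hd
    have h1 : N.X n a r ⊆ N.Att N1 hj.choose := hj.choose_spec
    have h2 : hj.choose ≤ K := by
      have : f a = hj.choose := dif_pos hj
      calc hj.choose = f a := this.symm
        _ ≤ K := Finset.le_sup hapar
    exact h1.trans (N.att_mono' N1 h2)
  exact hna (Set.mem_iUnion.mpr ⟨K + 1, Or.inl (Or.inr ⟨hn1, r, hr, hKa⟩)⟩)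

end Negotiation

open Negotiation in
/-- in a sound, weakly deterministic type 2 negotiation arena, if `n0`
does not belong to the attractor of `nf`, then every play in which Player 2 sends,
at atoms of `N2` outside the attractor, some deterministic agent outside the
attractor, is infinite and `nf` never occurs: Player 2 has a winning strategy. -/
theorem escape_strategy_wins {A Atom Out : Type*}
    (N : Negotiation A Atom Out) (N1 : Set Atom)
    (hs : N.Sound) (hW : N.WD2)
    (h0 : N.n0 ∉ N.attractor N1)
    (p : ℕ → Option (Finset Atom × (Atom → Out)))
    (hv : N.ValidPlay p) (ha : N.FollowsEscape N1 p) :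
    (∀ k, p k ≠ none) ∧ (∀ k S F, p k = some (S, F) → N.nf ∉ S) := by
  classical
  have inv : ∀ k, ∃ a, N.Det a ∧ (N.playMarks p k a).Nonempty ∧
      ∀ m ∈ N.playMarks p k a, m ∉ N.attractor N1 := by
    intro k
    induction k with
    | zero =>
      obtain ⟨a, _, hda⟩ := hW N.n0
      refine ⟨a, hda, ⟨N.n0, rfl⟩, ?_⟩
      intro m hm
      have : m = N.n0 := hm
      rwa [this]
    | succ k ih =>
      obtain ⟨a, hda, hne, hout⟩ := ih
      cases hp : p k with
      | none =>
        have hmark : N.playMarks p (k + 1) = N.playMarks p k := by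
          simp [playMarks, hp]
        exact ⟨a, hda, hmark ▸ hne, hmark ▸ hout⟩
      | some SF =>
        obtain ⟨S, F⟩ := SF
        obtain ⟨hSne, hIndep, hmem⟩ := (hv k).1 S F hp
        have hmarkeq : N.playMarks p (k + 1) = N.execSet (N.playMarks p k) S F := by
          simp [playMarks, hp]
        by_cases hpar : ∃ n ∈ S, a ∈ N.parties n
        · obtain ⟨n, hnS, hanp⟩ := hpar
          have hen : N.Enables (N.playMarks p k) n := (hmem n hnS).1
          have hFn : F n ∈ N.outcomes n := (hmem n hnS).2
          have hnx : n ∈ N.playMarks p k a := hen a hanp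
          have hnA : n ∉ N.attractor N1 := hout n hnx
          have hnf : n ≠ N.nf := by
            rintro rfl
            exact hnA (Set.mem_iUnion.mpr ⟨0, rfl⟩)
          have hesc : ∃ a' ∈ N.parties n, N.Det a' ∧
              ∀ m ∈ N.X n a' (F n), m ∉ N.attractor N1 := by
            by_cases hn1 : n ∈ N1
            · exact N.escape_of_not_mem' N1 hn1 hFn hnA
            · obtain ⟨a', ha', hda', m, hm, hmA⟩ := ha k S F hp n hnS hn1 hnA
              obtain ⟨m0, hm0⟩ := hda' n (F n) hnf ha' hFn
              refine ⟨a', ha', hda', ?_⟩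
              intro m' hm'
              rw [hm0, Set.mem_singleton_iff] at hm hm'
              rw [hm'] ; rw [hm] at hmA
              exact hmA
          obtain ⟨a', ha', hda', hXa'⟩ := hesc
          have hmark : N.playMarks p (k + 1) a' = N.X n a' (F n) := by
            rw [hmarkeq]
            have hcond : ∃ m ∈ S, a' ∈ N.parties m := ⟨n, hnS, ha'⟩
            simp only [execSet, if_pos hcond]
            have hfilt : S.filter (fun m => a' ∈ N.parties m) = {n} := by
              ext m
              simp only [Finset.mem_filter, Finset.mem_singleton]
              constructor
              · rintro ⟨hmS, ham⟩
                by_contra hne'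
                exact (Finset.disjoint_left.mp (hIndep m hmS n hnS hne') ham) ha'
              · rintro rfl
                exact ⟨hnS, ha'⟩
            rw [hfilt]
            simp
          refine ⟨a', hda', ?_, ?_⟩
          · rw [hmark]
            exact N.X_nonempty n a' (F n) hnf ha' hFn
          · rw [hmark]
            exact hXa'
        · have hmark : N.playMarks p (k + 1) a = N.playMarks p k a := by
            rw [hmarkeq]
            simp only [execSet, if_neg hpar]
          exact ⟨a, hda, hmark ▸ hne, hmark ▸ hout⟩
  have reach : ∀ k, N.Reach N.x0 (N.playMarks p k) := by
    intro k
    induction k with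
    | zero => exact Reach.refl _
    | succ k ih =>
      cases hp : p k with
      | none =>
        have hmark : N.playMarks p (k + 1) = N.playMarks p k := by
          simp [playMarks, hp]
        rwa [hmark]
      | some SF =>
        obtain ⟨S, F⟩ := SF
        obtain ⟨hSne, hIndep, hmem⟩ := (hv k).1 S F hp
        have hmarkeq : N.playMarks p (k + 1) = N.execSet (N.playMarks p k) S F := by
          simp [playMarks, hp]
        rw [hmarkeq]
        exact reach_trans' ih (N.reach_execSet' S _ F hIndep
          (fun n hn => (hmem n hn).1) (fun n hn => (hmem n hn).2))
  constructor
  · intro k hk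
    have hno := ((hv k).2 hk).2
    obtain ⟨a, hda, hne, hout⟩ := inv k
    have hrf := hs.2 _ (reach k)
    rcases reach_enabled' hrf with heq | ⟨n, hen⟩
    · obtain ⟨m, hm⟩ := hne
      rw [heq] at hm
      exact hm
    · exact hno n hen
  · intro k S F hp hnfS
    obtain ⟨a, hda, hne, hout⟩ := inv k
    obtain ⟨_, _, hmem⟩ := (hv k).1 S F hp
    have hmem' := (hmem N.nf hnfS).1 a (N.mem_nf a)
    exact hout _ hmem' (Set.mem_iUnion.mpr ⟨0, rfl⟩)
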